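/- Assuming the Hardy–Littlewood conjecture in the form ∑_{n≤x} ∏_{h∈H} 1_ℙ(n+h) = 𝔖(H)∫₂ˣ du/(log u)^{|H|} + O(x^{1/2+ε}) for all finite H ⊆ ℤ, the equivalent 'modified' form holds: ∑_{n≤x} ∏_{h∈H} (1_ℙ(n+h) - 1/log n) = 𝔖₀(H)∫₂ˣ du/(log u)^{|H|} + O_H(x^{1/2+ε}), where 𝔖₀(H) = ∑_{T⊆H}(-1)^{|H∖T|}𝔖(T). -/

import Mathlib

/-- The Hardy–Littlewood singular series
`𝔖(H) = ∏_p (1 - |H mod p|/p)(1 - 1/p)^{-|H|}`. -/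
noncomputable def singSeries (H : Finset ℤ) : ℝ :=
  ∏' p : Nat.Primes,
    (1 - ((H.image (fun t : ℤ => (t : ZMod (p : ℕ)))).card : ℝ) / (p : ℝ)) *
      ((1 - 1 / (p : ℝ)) ^ (-(H.card : ℤ)))

/-- The modified singular series `𝔖₀(H) = ∑_{T ⊆ H} (-1)^{|H∖T|} 𝔖(T)`. -/
noncomputable def singSeries₀ (H : Finset ℤ) : ℝ :=
  ∑ T ∈ H.powerset, (-1 : ℝ) ^ ((H \ T).card) * singSeries T

/-- The indicator function of the primes on `ℤ`. -/
def primeInd (m : ℤ) : ℝ := if m.toNat.Prime then 1 else 0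

/-!
Expanding `∏_{h ∈ H} (1_ℙ(n+h) - 1/log n)` over the subsets `T ⊆ H` reduces the claim to
`∑_{2 ≤ n ≤ x} a(n) (log n)^{-k} = 𝔖(T) Li_{|T|+k}(x) + O(x^{1/2+ε})`, where
`a(n) = ∏_{h ∈ T} 1_ℙ(n+h)`, `k = |H ∖ T|` and `Li_m(x) = ∫₂ˣ du/(log u)^m`.
Put `f = (log)^{-k}`, `A(t) = ∑_{2 ≤ n ≤ t} a(n)` and `E = A - 𝔖(T) Li_{|T|}`. Abel summation
and integration by parts (with `f · Li_{|T|}' = Li_{|T|+k}'`) give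
`∑ a(n) f(n) - 𝔖(T) Li_{|T|+k}(x) = f(x) E(x) - ∫₂ˣ f' E`.
The Hardy–Littlewood estimate bounds `E` at integers, hence at all real `t ≥ 2` because `Li`
is Lipschitz there; as `f` is bounded and `|f'(t)| ≪ 1/t`, the right side is `O(x^{1/2+ε})`.
-/

open Set MeasureTheory Filter Asymptotics

noncomputable def logPowIntegral (m : ℕ) (x : ℝ) : ℝ := ∫ u in (2 : ℝ)..x, 1 / Real.log u ^ m

lemma continuousOn_one_div_log_pow (m : ℕ) :
    ContinuousOn (fun u => 1 / Real.log u ^ m) (Ioi 1) :=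
  continuousOn_const.div
    ((Real.continuousOn_log.mono fun u (hu : 1 < u) => (zero_lt_one.trans hu).ne').pow m)
    fun _ hu => pow_ne_zero _ (Real.log_pos hu).ne'

lemma intervalIntegrable_one_div_log_pow (m : ℕ) {a b : ℝ} (ha : 1 < a) (hb : 1 < b) :
    IntervalIntegrable (fun u => 1 / Real.log u ^ m) volume a b :=
  ((continuousOn_one_div_log_pow m).mono fun _ hu =>
    (lt_min ha hb).trans_le hu.1).intervalIntegrable

lemma abs_one_div_log_pow_le (m : ℕ) {t : ℝ} (ht : 2 ≤ t) :
    |1 / Real.log t ^ m| ≤ (Real.log 2)⁻¹ ^ m := by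
  have hlog2 : 0 < Real.log 2 := Real.log_pos one_lt_two
  have hlog : Real.log 2 ≤ Real.log t := Real.log_le_log two_pos ht
  have : 0 < Real.log t := hlog2.trans_le hlog
  rw [abs_of_nonneg (by positivity), one_div, ← inv_pow]
  gcongr

lemma hasDerivAt_one_div_log_pow (k : ℕ) {t : ℝ} (ht : 1 < t) :
    HasDerivAt (fun u => 1 / Real.log u ^ k) (-k / (t * Real.log t ^ (k + 1))) t := by
  have hlog : Real.log t ≠ 0 := (Real.log_pos ht).ne'
  simp only [one_div]
  refine (((Real.hasDerivAt_log (by positivity)).fun_pow k).fun_inv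
    (pow_ne_zero k hlog)).congr_deriv ?_
  rcases k with _ | k
  · simp
  · rw [Nat.add_sub_cancel]
    field_simp
    ring

lemma continuousOn_deriv_one_div_log_pow (k : ℕ) :
    ContinuousOn (fun t => -k / (t * Real.log t ^ (k + 1))) (Ioi 1) :=
  continuousOn_const.div (continuousOn_id.mul
    ((Real.continuousOn_log.mono fun u (hu : 1 < u) => (zero_lt_one.trans hu).ne').pow _))
    fun u (hu : 1 < u) => mul_ne_zero (by positivity) (pow_ne_zero _ (Real.log_pos hu).ne')

lemma abs_deriv_one_div_log_pow_le (k : ℕ) {t : ℝ} (ht : 2 ≤ t) :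
    |-k / (t * Real.log t ^ (k + 1))| ≤ k * (Real.log 2)⁻¹ ^ (k + 1) / t := by
  have ht0 : 0 < t := by linarith
  rw [show -k / (t * Real.log t ^ (k + 1)) = -(k * (1 / Real.log t ^ (k + 1)) / t) by ring,
    abs_neg, abs_div, abs_mul, Nat.abs_cast, abs_of_pos ht0]
  gcongr
  exact abs_one_div_log_pow_le (k + 1) ht

lemma hasDerivAt_logPowIntegral (m : ℕ) {t : ℝ} (ht : 1 < t) :
    HasDerivAt (logPowIntegral m) (1 / Real.log t ^ m) t :=
  intervalIntegral.integral_hasDerivAt_right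
    (intervalIntegrable_one_div_log_pow m one_lt_two ht)
    ((continuousOn_one_div_log_pow m).stronglyMeasurableAtFilter isOpen_Ioi t ht)
    ((continuousOn_one_div_log_pow m).continuousAt (Ioi_mem_nhds ht))

lemma abs_logPowIntegral_sub_le (m : ℕ) {a b : ℝ} (ha : 2 ≤ a) (hb : 2 ≤ b) :
    |logPowIntegral m b - logPowIntegral m a| ≤ (Real.log 2)⁻¹ ^ m * |b - a| := by
  rw [logPowIntegral, logPowIntegral, intervalIntegral.integral_interval_sub_left
    (intervalIntegrable_one_div_log_pow m one_lt_two (by linarith))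
    (intervalIntegrable_one_div_log_pow m one_lt_two (by linarith))]
  refine intervalIntegral.norm_integral_le_of_norm_le_const (E := ℝ) fun u hu => ?_
  exact abs_one_div_log_pow_le m (le_min ha hb |>.trans hu.1.le)

lemma abs_le_mul_rpow_of_abs_sub_floor_le {E : ℝ → ℝ} {C D e : ℝ} (he : 0 ≤ e)
    (hnat : ∀ n : ℕ, 3 ≤ n → |E n| ≤ C * n ^ e) (hosc : ∀ t ∈ Ici (2 : ℝ), |E t - E ⌊t⌋₊| ≤ D) :
    ∀ t ∈ Ici (2 : ℝ), |E t| ≤ (C + D + |E 2|) * t ^ e := by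
  intro t (ht : 2 ≤ t)
  have ht0 : 0 ≤ t := by linarith
  have hte : 1 ≤ t ^ e := Real.one_le_rpow (by linarith) he
  have hC : 0 ≤ C := nonneg_of_mul_nonneg_left ((abs_nonneg _).trans (hnat 3 le_rfl))
    (by positivity)
  have hD : 0 ≤ D := (abs_nonneg _).trans (hosc t ht)
  have hfloor : 2 ≤ ⌊t⌋₊ := Nat.le_floor (by exact_mod_cast ht)
  have hsplit : |E t| ≤ D + |E ⌊t⌋₊| := by
    have := abs_sub_abs_le_abs_sub (E t) (E ⌊t⌋₊)
    linarith [hosc t ht]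
  have key : |E t| ≤ C * t ^ e + (D + |E 2|) := by
    rcases (show ⌊t⌋₊ = 2 ∨ 3 ≤ ⌊t⌋₊ by omega) with h2 | h3
    · rw [h2, Nat.cast_ofNat] at hsplit
      nlinarith [mul_nonneg hC (zero_le_one.trans hte)]
    · have : C * (⌊t⌋₊ : ℝ) ^ e ≤ C * t ^ e := by gcongr; exact Nat.floor_le ht0
      linarith [hnat _ h3, abs_nonneg (E 2)]
  nlinarith [abs_nonneg (E 2)]

lemma exists_abs_sum_floor_sub_logPowIntegral_le {a : ℕ → ℝ} {σ e : ℝ} {m : ℕ} (he : 0 ≤ e)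
    (h : (fun x : ℕ => ∑ n ∈ Finset.Icc 2 x, a n - σ * logPowIntegral m x)
      =O[𝓟 (Ici 3)] fun x : ℕ => (x : ℝ) ^ e) :
    ∃ C, ∀ t ∈ Ici (2 : ℝ),
      |∑ n ∈ Finset.Icc 2 ⌊t⌋₊, a n - σ * logPowIntegral m t| ≤ C * t ^ e := by
  obtain ⟨C, hC⟩ := isBigO_principal.mp h
  set E : ℝ → ℝ := fun t => ∑ n ∈ Finset.Icc 2 ⌊t⌋₊, a n - σ * logPowIntegral m t
  have hnat : ∀ n : ℕ, 3 ≤ n → |E n| ≤ C * (n : ℝ) ^ e := fun n hn => by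
    simpa only [E, Nat.floor_natCast, Real.norm_eq_abs,
      abs_of_nonneg (by positivity : (0 : ℝ) ≤ (n : ℝ) ^ e)] using hC n hn
  have hosc : ∀ t ∈ Ici (2 : ℝ), |E t - E ⌊t⌋₊| ≤ |σ| * (Real.log 2)⁻¹ ^ m := by
    intro t (ht : 2 ≤ t)
    have hfloor : (2 : ℝ) ≤ ⌊t⌋₊ := by exact_mod_cast Nat.le_floor (by exact_mod_cast ht)
    have hdist : |(⌊t⌋₊ : ℝ) - t| ≤ 1 := by
      rw [abs_sub_comm, abs_of_nonneg (by linarith [Nat.floor_le (zero_le_two.trans ht)])]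
      linarith [Nat.lt_floor_add_one t]
    simp only [E, Nat.floor_natCast]
    rw [show ∀ S : ℝ, S - σ * logPowIntegral m t - (S - σ * logPowIntegral m ⌊t⌋₊) =
      σ * (logPowIntegral m ⌊t⌋₊ - logPowIntegral m t) from fun S => by ring, abs_mul]
    gcongr
    exact (abs_logPowIntegral_sub_le m ht hfloor).trans
      (mul_le_of_le_one_right (by positivity) hdist)
  exact ⟨_, abs_le_mul_rpow_of_abs_sub_floor_le he hnat hosc⟩

lemma sum_Icc_two_mul_eq_sub_integral_mul (a : ℕ → ℝ) {f : ℝ → ℝ} (x : ℝ)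
    (hf_diff : ∀ t ∈ Icc 2 x, DifferentiableAt ℝ f t) (hf_int : IntegrableOn (deriv f) (Icc 2 x)) :
    ∑ k ∈ Finset.Icc 2 ⌊x⌋₊, f k * a k =
      f x * ∑ k ∈ Finset.Icc 2 ⌊x⌋₊, a k -
        ∫ t in Ioc 2 x, deriv f t * ∑ k ∈ Finset.Icc 2 ⌊t⌋₊, a k := by
  have hIcc : ∀ (g : ℕ → ℝ) N, ∑ k ∈ Finset.Icc 0 N, (if 2 ≤ k then g k else 0) =
      ∑ k ∈ Finset.Icc 2 N, g k := fun g N => by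
    rw [← Finset.sum_filter]
    congr 1
    ext k
    simp only [Finset.mem_filter, Finset.mem_Icc]
    omega
  have := sum_mul_eq_sub_integral_mul₁ (fun k => if 2 ≤ k then a k else 0) (by simp) (by simp)
    x hf_diff hf_int
  simp only [mul_ite, mul_zero, hIcc] at this
  exact this

lemma integral_rpow_sub_one_le {a x e : ℝ} (ha : 0 ≤ a) (he : 0 < e) :
    ∫ t in a..x, t ^ (e - 1) ≤ x ^ e / e := by
  rw [integral_rpow (Or.inl (by linarith)), sub_add_cancel]
  gcongr
  linarith [Real.rpow_nonneg ha e]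

section PartialSummation

variable {a : ℕ → ℝ} {f f' F G : ℝ → ℝ} {σ x : ℝ}

lemma sum_mul_sub_integral_mul_eq
    (hf : ∀ t ∈ Ici (2 : ℝ), HasDerivAt f (f' t) t) (hf' : ContinuousOn f' (Ici 2))
    (hF : ∀ t ∈ Ici (2 : ℝ), HasDerivAt F (G t) t) (hG : ContinuousOn G (Ici 2)) (hF2 : F 2 = 0)
    (hx : 2 ≤ x) :
    ∑ k ∈ Finset.Icc 2 ⌊x⌋₊, f k * a k - σ * ∫ t in (2 : ℝ)..x, f t * G t =
      f x * (∑ k ∈ Finset.Icc 2 ⌊x⌋₊, a k - σ * F x) -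
        ∫ t in (2 : ℝ)..x, f' t * (∑ k ∈ Finset.Icc 2 ⌊t⌋₊, a k - σ * F t) := by
  have hsub : Icc 2 x ⊆ Ici (2 : ℝ) := Icc_subset_Ici_self
  have huIcc : uIcc 2 x ⊆ Ici 2 := by rw [uIcc_of_le hx]; exact hsub
  have hf'int : IntegrableOn f' (Icc 2 x) := (hf'.mono hsub).integrableOn_Icc
  have hFcont : ContinuousOn F (Ici 2) := fun t ht => (hF t ht).continuousAt.continuousWithinAt
  have habel : ∑ k ∈ Finset.Icc 2 ⌊x⌋₊, f k * a k = f x * ∑ k ∈ Finset.Icc 2 ⌊x⌋₊, a k -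
      ∫ t in (2 : ℝ)..x, f' t * ∑ k ∈ Finset.Icc 2 ⌊t⌋₊, a k := by
    have hderiv : EqOn f' (deriv f) (Icc 2 x) := fun t ht => (hf t (hsub ht)).deriv.symm
    rw [sum_Icc_two_mul_eq_sub_integral_mul a x (fun t ht => (hf t (hsub ht)).differentiableAt)
      (hf'int.congr_fun hderiv measurableSet_Icc), intervalIntegral.integral_of_le hx]
    congr 1
    refine setIntegral_congr_fun measurableSet_Ioc fun t ht => ?_
    rw [(hf t (hsub (Ioc_subset_Icc_self ht))).deriv]
  have hparts : ∫ t in (2 : ℝ)..x, f t * G t = f x * F x - ∫ t in (2 : ℝ)..x, f' t * F t := by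
    rw [intervalIntegral.integral_mul_deriv_eq_deriv_mul (fun t ht => hf t (huIcc ht))
      (fun t ht => hF t (huIcc ht)) (hf'.mono huIcc).intervalIntegrable
      (hG.mono huIcc).intervalIntegrable, hF2, mul_zero, sub_zero]
  have hf'A : IntervalIntegrable (fun t => f' t * ∑ k ∈ Finset.Icc 2 ⌊t⌋₊, a k) volume 2 x :=
    (intervalIntegrable_iff_integrableOn_Icc_of_le hx).mpr
      (integrableOn_mul_sum_Icc a zero_le_two hf'int)
  have hf'F : IntervalIntegrable (fun t => f' t * F t) volume 2 x :=
    ((hf'.mul hFcont).mono huIcc).intervalIntegrable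
  have hsplit : ∫ t in (2 : ℝ)..x, f' t * (∑ k ∈ Finset.Icc 2 ⌊t⌋₊, a k - σ * F t) =
      (∫ t in (2 : ℝ)..x, f' t * ∑ k ∈ Finset.Icc 2 ⌊t⌋₊, a k) -
        σ * ∫ t in (2 : ℝ)..x, f' t * F t := by
    rw [← intervalIntegral.integral_const_mul, ← intervalIntegral.integral_sub hf'A
      (hf'F.const_mul σ)]
    congr 1 with t
    ring
  rw [habel, hparts, hsplit]
  ring

theorem abs_sum_mul_sub_integral_mul_le {B B' C e : ℝ}
    (hf : ∀ t ∈ Ici (2 : ℝ), HasDerivAt f (f' t) t) (hf' : ContinuousOn f' (Ici 2))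
    (hF : ∀ t ∈ Ici (2 : ℝ), HasDerivAt F (G t) t) (hG : ContinuousOn G (Ici 2)) (hF2 : F 2 = 0)
    (hfB : ∀ t ∈ Ici (2 : ℝ), |f t| ≤ B) (hf'B : ∀ t ∈ Ici (2 : ℝ), |f' t| ≤ B' / t)
    (he : 0 < e) (hE : ∀ t ∈ Ici (2 : ℝ), |∑ k ∈ Finset.Icc 2 ⌊t⌋₊, a k - σ * F t| ≤ C * t ^ e)
    (hx : 2 ≤ x) :
    |∑ k ∈ Finset.Icc 2 ⌊x⌋₊, f k * a k - σ * ∫ t in (2 : ℝ)..x, f t * G t| ≤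
      (B * C + B' * C / e) * x ^ e := by
  rw [sum_mul_sub_integral_mul_eq hf hf' hF hG hF2 hx]
  set E : ℝ → ℝ := fun t => ∑ k ∈ Finset.Icc 2 ⌊t⌋₊, a k - σ * F t
  have hC : 0 ≤ C := nonneg_of_mul_nonneg_left ((abs_nonneg _).trans (hE 2 self_mem_Ici))
    (by positivity)
  have hB' : 0 ≤ B' := by linarith [(abs_nonneg _).trans (hf'B 2 self_mem_Ici)]
  have hpoint : ∀ t ∈ Ioc 2 x, ‖f' t * E t‖ ≤ B' * C * t ^ (e - 1) := fun t ht => by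
    have ht2 : t ∈ Ici (2 : ℝ) := ht.1.le
    have ht0 : 0 < t := by linarith [ht.1]
    rw [Real.norm_eq_abs, abs_mul]
    calc |f' t| * |E t| ≤ B' / t * (C * t ^ e) :=
          mul_le_mul (hf'B t ht2) (hE t ht2) (abs_nonneg _) (by positivity)
      _ = B' * C * t ^ (e - 1) := by rw [Real.rpow_sub_one ht0.ne']; ring
  have hint : |∫ t in (2 : ℝ)..x, f' t * E t| ≤ B' * C * (x ^ e / e) := by
    refine (intervalIntegral.norm_integral_le_of_norm_le hx (ae_of_all _ hpoint) ?_).trans ?_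
    · exact (intervalIntegral.intervalIntegrable_rpow' (by linarith)).const_mul _
    · rw [intervalIntegral.integral_const_mul]
      gcongr
      exact integral_rpow_sub_one_le zero_le_two he
  calc |f x * E x - ∫ t in (2 : ℝ)..x, f' t * E t|
      ≤ |f x| * |E x| + |∫ t in (2 : ℝ)..x, f' t * E t| := by rw [← abs_mul]; exact abs_sub _ _
    _ ≤ B * (C * x ^ e) + B' * C * (x ^ e / e) := by
      gcongr
      · exact (abs_nonneg _).trans (hfB 2 self_mem_Ici)
      · exact hfB x hx
      · exact hE x hx
    _ = (B * C + B' * C / e) * x ^ e := by ring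

end PartialSummation

theorem isBigO_sum_mul_one_div_log_pow {a : ℕ → ℝ} {σ e : ℝ} {m : ℕ} (he : 0 < e)
    (h : (fun x : ℕ => ∑ n ∈ Finset.Icc 2 x, a n - σ * logPowIntegral m x)
      =O[𝓟 (Ici 3)] fun x : ℕ => (x : ℝ) ^ e) (k : ℕ) :
    (fun x : ℕ => ∑ n ∈ Finset.Icc 2 x, a n * (1 / Real.log n ^ k) -
      σ * logPowIntegral (m + k) x) =O[𝓟 (Ici 3)] fun x : ℕ => (x : ℝ) ^ e := by
  obtain ⟨C, hC⟩ := exists_abs_sum_floor_sub_logPowIntegral_le he.le h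
  refine isBigO_principal.mpr ⟨(Real.log 2)⁻¹ ^ k * C + k * (Real.log 2)⁻¹ ^ (k + 1) * C / e,
    fun x (hx : 3 ≤ x) => ?_⟩
  have hx2 : (2 : ℝ) ≤ x := by exact_mod_cast (show 2 ≤ x by omega)
  have hIoi : Ici (2 : ℝ) ⊆ Ioi 1 := fun t (ht : 2 ≤ t) => by simp only [mem_Ioi]; linarith
  have hbound := abs_sum_mul_sub_integral_mul_le (a := a) (σ := σ)
    (fun t ht => hasDerivAt_one_div_log_pow k (hIoi ht))
    ((continuousOn_deriv_one_div_log_pow k).mono hIoi)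
    (fun t ht => hasDerivAt_logPowIntegral m (hIoi ht))
    ((continuousOn_one_div_log_pow m).mono hIoi) intervalIntegral.integral_same
    (fun t ht => abs_one_div_log_pow_le k ht) (fun t ht => abs_deriv_one_div_log_pow_le k ht)
    he hC hx2
  have hint : ∫ t in (2 : ℝ)..x, 1 / Real.log t ^ k * (1 / Real.log t ^ m) =
      logPowIntegral (m + k) x :=
    intervalIntegral.integral_congr fun t _ => by ring
  rw [Nat.floor_natCast, hint] at hbound
  rw [Real.norm_eq_abs, Real.norm_of_nonneg (by positivity)]
  convert hbound using 4 with n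
  exact mul_comm _ _

lemma isBigO_principal_iff_exists_pos {α : Type*} {f g : α → ℝ} {s : Set α}
    (hg : ∀ x ∈ s, 0 ≤ g x) : f =O[𝓟 s] g ↔ ∃ C, 0 < C ∧ ∀ x ∈ s, |f x| ≤ C * g x := by
  constructor
  · intro h
    obtain ⟨C, hC, hw⟩ := h.exists_pos
    refine ⟨C, hC, fun x hx => ?_⟩
    simpa only [Real.norm_eq_abs, abs_of_nonneg (hg x hx)] using isBigOWith_principal.mp hw x hx
  · rintro ⟨C, -, hC⟩
    refine isBigO_principal.mpr ⟨C, fun x hx => ?_⟩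
    simpa only [Real.norm_eq_abs, abs_of_nonneg (hg x hx)] using hC x hx

lemma sum_prod_sub_eq_sum_powerset {ι κ R : Type*} [DecidableEq ι] [CommRing R] (s : Finset κ)
    (H : Finset ι) (a : κ → ι → R) (b : κ → R) :
    ∑ n ∈ s, ∏ h ∈ H, (a n h - b n) =
      ∑ T ∈ H.powerset, (-1) ^ (H \ T).card * ∑ n ∈ s, (∏ h ∈ T, a n h) * b n ^ (H \ T).card := by
  simp only [sub_eq_add_neg, Finset.prod_add, Finset.prod_const]
  rw [Finset.sum_comm]
  refine Finset.sum_congr rfl fun T _ => ?_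
  rw [Finset.mul_sum]
  refine Finset.sum_congr rfl fun n _ => ?_
  rw [neg_pow]
  ring

/-- The Hardy–Littlewood conjecture implies its modified form:
if `∑_{n ≤ x} ∏_{h ∈ H} 1_ℙ(n+h) = 𝔖(H) ∫₂ˣ du/(log u)^{|H|} + O(x^{1/2+ε})` for all
finite `H ⊆ ℤ`, then
`∑_{n ≤ x} ∏_{h ∈ H} (1_ℙ(n+h) - 1/log n) = 𝔖₀(H) ∫₂ˣ du/(log u)^{|H|} + O_{H,ε}(x^{1/2+ε})`. -/
theorem stmt19
    (HL : ∀ H : Finset ℤ, ∀ ε : ℝ, 0 < ε → ∃ C : ℝ, 0 < C ∧ ∀ x : ℕ, 3 ≤ x →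
      |(∑ n ∈ Finset.Icc 2 x, ∏ h ∈ H, primeInd ((n : ℤ) + h)) -
          singSeries H * ∫ u in (2 : ℝ)..(x : ℝ), 1 / (Real.log u) ^ H.card| ≤
        C * (x : ℝ) ^ ((1 : ℝ) / 2 + ε)) :
    ∀ H : Finset ℤ, ∀ ε : ℝ, 0 < ε → ∃ C : ℝ, 0 < C ∧ ∀ x : ℕ, 3 ≤ x →
      |(∑ n ∈ Finset.Icc 2 x, ∏ h ∈ H, (primeInd ((n : ℤ) + h) - 1 / Real.log n)) -
          singSeries₀ H * ∫ u in (2 : ℝ)..(x : ℝ), 1 / (Real.log u) ^ H.card| ≤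
        C * (x : ℝ) ^ ((1 : ℝ) / 2 + ε) := by
  intro H ε hε
  have he : (0 : ℝ) < 1 / 2 + ε := by positivity
  have hpos : ∀ x ∈ Ici (3 : ℕ), (0 : ℝ) ≤ (x : ℝ) ^ ((1 : ℝ) / 2 + ε) := fun x _ => by positivity
  have hexpand : ∀ x : ℕ, (∑ n ∈ Finset.Icc 2 x, ∏ h ∈ H,
      (primeInd ((n : ℤ) + h) - 1 / Real.log n)) - singSeries₀ H * logPowIntegral H.card x =
      ∑ T ∈ H.powerset, (-1) ^ (H \ T).card * (∑ n ∈ Finset.Icc 2 x,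
        (∏ h ∈ T, primeInd ((n : ℤ) + h)) * (1 / Real.log n ^ (H \ T).card) -
          singSeries T * logPowIntegral (T.card + (H \ T).card) x) := fun x => by
    rw [sum_prod_sub_eq_sum_powerset, singSeries₀, Finset.sum_mul, ← Finset.sum_sub_distrib]
    refine Finset.sum_congr rfl fun T hT => ?_
    rw [add_comm, Finset.card_sdiff_add_card_eq_card (Finset.mem_powerset.mp hT)]
    simp only [one_div_pow]
    ring
  have hT : ∀ T : Finset ℤ, (fun x : ℕ => ∑ n ∈ Finset.Icc 2 x, ∏ h ∈ T, primeInd ((n : ℤ) + h) -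
      singSeries T * logPowIntegral T.card x) =O[𝓟 (Ici 3)] fun x : ℕ => (x : ℝ) ^ (1 / 2 + ε) :=
    fun T => (isBigO_principal_iff_exists_pos hpos).mpr (HL T ε hε)
  have hsum : (fun x : ℕ => (∑ n ∈ Finset.Icc 2 x, ∏ h ∈ H,
      (primeInd ((n : ℤ) + h) - 1 / Real.log n)) - singSeries₀ H * logPowIntegral H.card x)
      =O[𝓟 (Ici 3)] fun x : ℕ => (x : ℝ) ^ (1 / 2 + ε) := by
    simp only [hexpand]
    exact IsBigO.fun_sum fun T _ => (isBigO_sum_mul_one_div_log_pow he (hT T) _).const_mul_left _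
  exact (isBigO_principal_iff_exists_pos hpos).mp hsum
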